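/- arXiv:2108.07215 — 7 statements merged into one kernel-verified Lean document; each statement's English description precedes it below -/
import Mathlib

section
/- Let t ∈ ℝ and v ∈ ℝ³, and define the linear map p_{t,v} on ℝ⁵ = ℝ × ℝ³ × ℝ by p_{t,v}(x₀, x, x₄) = (x₀ + t·b(v,x) − (t²·q(v)/2)·x₄, x − t·x₄·v, x₄). Then: (a) p_{t,v} preserves the quadratic form Q(x₀, x, x₄) = 2x₀x₄ + q(x) on ℝ⁵, i.e. Q(p_{t,v}(ξ)) = Q(ξ) for all ξ ∈ ℝ⁵; (b) for every x ∈ ℝ³, setting j(x) = (1, x, −q(x)/2) ∈ ℝ⁵ and D = 1 + t·b(x,v) + (t²/4)·q(v)·q(x), one has q(x + (t·q(x)/2)·v) = D·q(x), and if D ≠ 0 then p_{t,v}(j(x)) = D · j(D⁻¹·(x + (t·q(x)/2)·v)). -/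
noncomputable section

/-- The Lorentzian quadratic form `q(x) = 2x₁x₃ + x₂²` on `ℝ³`. -/
def qF (x : Fin 3 → ℝ) : ℝ := 2 * x 0 * x 2 + (x 1) ^ 2

/-- The polar bilinear form `b(x,v) = x₁v₃ + x₂v₂ + x₃v₁` of `qF`. -/
def bF (x v : Fin 3 → ℝ) : ℝ := x 0 * v 2 + x 1 * v 1 + x 2 * v 0

/-- The quadratic form `Q(x₀,x,x₄) = 2x₀x₄ + q(x)` on `ℝ⁵ = ℝ × ℝ³ × ℝ`. -/
def Q5 (ξ : ℝ × (Fin 3 → ℝ) × ℝ) : ℝ := 2 * ξ.1 * ξ.2.2 + qF ξ.2.1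

/-- The linear map `p_{t,v}` on `ℝ⁵ = ℝ × ℝ³ × ℝ`. -/
def pMap (t : ℝ) (v : Fin 3 → ℝ) (ξ : ℝ × (Fin 3 → ℝ) × ℝ) : ℝ × (Fin 3 → ℝ) × ℝ :=
  (ξ.1 + t * bF v ξ.2.1 - t ^ 2 * qF v / 2 * ξ.2.2, ξ.2.1 - (t * ξ.2.2) • v, ξ.2.2)

/-- The conformal embedding `j(x) = (1, x, -q(x)/2)` of Minkowski space in `ℝ⁵`. -/
def jF (x : Fin 3 → ℝ) : ℝ × (Fin 3 → ℝ) × ℝ := (1, x, -qF x / 2)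

/-! The polarisation `q(x + s v) = q(x) + 2 s b(x,v) + s² q(v)` with `s = t q(x)/2` gives
`q(y) = D q(x)` for `y = x + (t q(x)/2) v`, and a direct computation gives
`p_{t,v}(j(x)) = (D, y, -q(x)/2)`. On the other hand `D • j(D⁻¹ y) = (D, y, -q(y)/(2D))`,
which is the same vector once `q(y) = D q(x)` is substituted. -/

lemma bF_comm (x v : Fin 3 → ℝ) : bF x v = bF v x := by
  simp only [bF]; ring

lemma bF_smul_right (x v : Fin 3 → ℝ) (c : ℝ) : bF x (c • v) = c * bF x v := by
  simp only [bF, Pi.smul_apply, smul_eq_mul]; ring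

lemma qF_smul (c : ℝ) (x : Fin 3 → ℝ) : qF (c • x) = c ^ 2 * qF x := by
  simp only [qF, Pi.smul_apply, smul_eq_mul]; ring

lemma qF_add (x y : Fin 3 → ℝ) : qF (x + y) = qF x + 2 * bF x y + qF y := by
  simp only [qF, bF, Pi.add_apply]; ring

lemma Q5_pMap (t : ℝ) (v : Fin 3 → ℝ) (ξ : ℝ × (Fin 3 → ℝ) × ℝ) :
    Q5 (pMap t v ξ) = Q5 ξ := by
  simp only [Q5, pMap, qF, bF, Pi.sub_apply, Pi.smul_apply, smul_eq_mul]
  ring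

lemma qF_add_smul_qF_smul (t : ℝ) (x v : Fin 3 → ℝ) :
    qF (x + (t * qF x / 2) • v) = (1 + t * bF x v + t ^ 2 / 4 * qF v * qF x) * qF x := by
  rw [qF_add, bF_smul_right, qF_smul]
  ring

lemma pMap_jF (t : ℝ) (v x : Fin 3 → ℝ) :
    pMap t v (jF x) =
      (1 + t * bF x v + t ^ 2 / 4 * qF v * qF x, x + (t * qF x / 2) • v, -qF x / 2) := by
  simp only [pMap, jF, bF_comm v x, sub_eq_add_neg, ← neg_smul]
  congr 2 <;> ring_nf

lemma smul_jF_inv_smul {c : ℝ} (hc : c ≠ 0) (y : Fin 3 → ℝ) :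
    c • jF (c⁻¹ • y) = (c, y, -(c⁻¹ * qF y) / 2) := by
  simp only [jF, qF_smul, Prod.smul_mk, smul_eq_mul, smul_inv_smul₀ hc, mul_one]
  congr 2
  rw [mul_div_assoc', mul_neg, sq, ← mul_assoc, ← mul_assoc, mul_inv_cancel₀ hc, one_mul]

theorem stmt0 (t : ℝ) (v : Fin 3 → ℝ) :
    (∀ ξ : ℝ × (Fin 3 → ℝ) × ℝ, Q5 (pMap t v ξ) = Q5 ξ) ∧
    (∀ x : Fin 3 → ℝ,
      qF (x + (t * qF x / 2) • v)
        = (1 + t * bF x v + t ^ 2 / 4 * qF v * qF x) * qF x ∧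
      ((1 + t * bF x v + t ^ 2 / 4 * qF v * qF x) ≠ 0 →
        pMap t v (jF x)
          = (1 + t * bF x v + t ^ 2 / 4 * qF v * qF x) •
              jF ((1 + t * bF x v + t ^ 2 / 4 * qF v * qF x)⁻¹ •
                (x + (t * qF x / 2) • v)))) := by
  refine ⟨Q5_pMap t v, fun x => ⟨qF_add_smul_qF_smul t x v, fun hD => ?_⟩⟩
  rw [pMap_jF, smul_jF_inv_smul hD, qF_add_smul_qF_smul, inv_mul_cancel_left₀ hD]
end
end

section
/- Let U and V be connected open subsets of ℍ⁺ and let f : U → V be a smooth diffeomorphism such that: (i) for every p ∈ U, the differential satisfies Df_p(C(p)) = C(f(p)); and (ii) f pushes 𝔥 forward into 𝔥, i.e. for each Z ∈ {A, B, C} there exist constants c_A, c_B, c_C ∈ ℝ with Df_p(Z(p)) = c_A·A(f(p)) + c_B·B(f(p)) + c_C·C(f(p)) for all p ∈ U. Then there exist unique real numbers α, β, γ, τ such that f(x,y) = (x + β·y + γ·log y + τ, e^α·y) for all (x,y) ∈ U. -/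
noncomputable section

/-- The upper half-plane `ℍ⁺ = {(x,y) : y > 0}`. -/
def Hplus : Set (ℝ × ℝ) := {p | 0 < p.2}

/-- The vector field `A = y·∂/∂y` on `ℍ⁺`. -/
def vfA (p : ℝ × ℝ) : ℝ × ℝ := (0, p.2)

/-- The vector field `B = y·∂/∂x` on `ℍ⁺`. -/
def vfB (p : ℝ × ℝ) : ℝ × ℝ := (p.2, 0)

/-- The vector field `C = ∂/∂x` on `ℍ⁺`. -/
def vfC (_p : ℝ × ℝ) : ℝ × ℝ := (1, 0)

private lemma clm_ext2 {F : Type*} [NormedAddCommGroup F] [NormedSpace ℝ F]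
    {L M : (ℝ × ℝ) →L[ℝ] F} (h1 : L (1, 0) = M (1, 0)) (h2 : L (0, 1) = M (0, 1)) :
    L = M := by
  apply ContinuousLinearMap.ext
  intro x
  have hx : (x : ℝ × ℝ) = x.1 • ((1:ℝ), (0:ℝ)) + x.2 • ((0:ℝ), (1:ℝ)) := by
    simp [Prod.ext_iff]
  rw [hx, L.map_add, M.map_add, L.map_smul, L.map_smul, M.map_smul, M.map_smul, h1, h2]

private lemma const_of_zero_fderiv {F : Type*} [NormedAddCommGroup F] [NormedSpace ℝ F]
    {s : Set (ℝ × ℝ)} (hs : IsOpen s) (hc : IsPreconnected s) {φ : ℝ × ℝ → F}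
    (hφ : ∀ p ∈ s, HasFDerivAt φ (0 : (ℝ × ℝ) →L[ℝ] F) p) {a : ℝ × ℝ} (ha : a ∈ s) :
    ∀ p ∈ s, φ p = φ a := by
  have hloc : ∀ q ∈ s, ∃ ε > 0, Metric.ball q ε ⊆ s ∧ ∀ x ∈ Metric.ball q ε, φ x = φ q := by
    intro q hq
    obtain ⟨ε, hε, hball⟩ := Metric.isOpen_iff.mp hs q hq
    refine ⟨ε, hε, hball, fun x hx => ?_⟩
    refine (convex_ball q ε).is_const_of_fderivWithin_eq_zero
      (fun y hy => ((hφ y (hball hy)).differentiableAt).differentiableWithinAt)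
      (fun y hy => ?_) hx (Metric.mem_ball_self hε)
    exact (hφ y (hball hy)).hasFDerivWithinAt.fderivWithin
      (Metric.isOpen_ball.uniqueDiffWithinAt hy)
  by_contra hcon
  push_neg at hcon
  obtain ⟨p, hp, hne⟩ := hcon
  have hSopen : IsOpen {x | x ∈ s ∧ φ x = φ a} := by
    rw [Metric.isOpen_iff]
    rintro q ⟨hq, hqa⟩
    obtain ⟨ε, hε, hball, hconst⟩ := hloc q hq
    exact ⟨ε, hε, fun x hx => ⟨hball hx, (hconst x hx).trans hqa⟩⟩
  have hTopen : IsOpen {x | x ∈ s ∧ φ x ≠ φ a} := by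
    rw [Metric.isOpen_iff]
    rintro q ⟨hq, hqa⟩
    obtain ⟨ε, hε, hball, hconst⟩ := hloc q hq
    exact ⟨ε, hε, fun x hx => ⟨hball hx, by rw [hconst x hx]; exact hqa⟩⟩
  have hsub : s ⊆ {x | x ∈ s ∧ φ x = φ a} ∪ {x | x ∈ s ∧ φ x ≠ φ a} := by
    intro x hx
    by_cases h : φ x = φ a
    · exact Or.inl ⟨hx, h⟩
    · exact Or.inr ⟨hx, h⟩
  obtain ⟨x, _, hxS, hxT⟩ := hc _ _ hSopen hTopen hsub ⟨a, ha, ha, rfl⟩ ⟨p, hp, hp, hne⟩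
  exact hxT.2 hxS.2

private lemma aux_indep {b c d y₀ δ : ℝ} (hy : 0 < y₀) (hδ : 0 < δ) (hδy : δ < y₀)
    (h : ∀ y ∈ Set.Ioo (y₀ - δ) (y₀ + δ), b * y + c * Real.log y + d = 0) :
    b = 0 ∧ c = 0 ∧ d = 0 := by
  have hderiv : ∀ y ∈ Set.Ioo (y₀ - δ) (y₀ + δ), b + c * y⁻¹ = 0 := by
    intro y hy'
    have hypos : 0 < y := by
      have := hy'.1; linarith
    have h1 : HasDerivAt (fun z => b * z + c * Real.log z + d) (b + c * y⁻¹) y := by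
      have h1a := (hasDerivAt_id y).const_mul b
      have h1b := (Real.hasDerivAt_log (ne_of_gt hypos)).const_mul c
      simpa using (h1a.add h1b).add_const d
    have h2 : HasDerivAt (fun z => b * z + c * Real.log z + d) 0 y := by
      have hev : (fun z => b * z + c * Real.log z + d) =ᶠ[nhds y] fun _ => 0 := by
        filter_upwards [Ioo_mem_nhds hy'.1 hy'.2] with z hz
        exact h z hz
      exact (hasDerivAt_const y (0:ℝ)).congr_of_eventuallyEq hev
    exact h1.unique h2
  have e1 := hderiv y₀ ⟨by linarith, by linarith⟩
  have e2 := hderiv (y₀ + δ/2) ⟨by linarith, by linarith⟩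
  have hy2 : (0:ℝ) < y₀ + δ/2 := by linarith
  have hc : c = 0 := by
    by_contra hc0
    have h3 : c * y₀⁻¹ = c * (y₀ + δ/2)⁻¹ := by linarith
    have h4 : y₀⁻¹ = (y₀ + δ/2)⁻¹ := mul_left_cancel₀ hc0 h3
    have h5 : y₀ = y₀ + δ/2 := inv_injective h4
    linarith
  have hb : b = 0 := by
    rw [hc] at e1; simpa using e1
  have hd0 : d = 0 := by
    have h6 := h y₀ ⟨by linarith, by linarith⟩
    rw [hb, hc] at h6; simpa using h6
  exact ⟨hb, hc, hd0⟩

theorem stmt3 (U V : Set (ℝ × ℝ)) (hUopen : IsOpen U) (hVopen : IsOpen V)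
    (hUconn : IsConnected U) (hVconn : IsConnected V)
    (hUH : U ⊆ Hplus) (hVH : V ⊆ Hplus)
    (f g : ℝ × ℝ → ℝ × ℝ)
    (hf : ContDiffOn ℝ (⊤ : ℕ∞) f U) (hg : ContDiffOn ℝ (⊤ : ℕ∞) g V)
    (hmaps : Set.MapsTo f U V) (hmaps' : Set.MapsTo g V U)
    (hinv₁ : ∀ p ∈ U, g (f p) = p) (hinv₂ : ∀ p ∈ V, f (g p) = p)
    (hC : ∀ p ∈ U, fderiv ℝ f p (vfC p) = vfC (f p))
    (hpush : ∀ Z ∈ ({vfA, vfB, vfC} : Set ((ℝ × ℝ) → ℝ × ℝ)),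
      ∃ cA cB cC : ℝ, ∀ p ∈ U,
        fderiv ℝ f p (Z p) = cA • vfA (f p) + cB • vfB (f p) + cC • vfC (f p)) :
    ∃! w : ℝ × ℝ × ℝ × ℝ, ∀ p ∈ U,
      f p = (p.1 + w.2.1 * p.2 + w.2.2.1 * Real.log p.2 + w.2.2.2,
             Real.exp w.1 * p.2) := by
  classical
  obtain ⟨p₀, hp₀⟩ := hUconn.nonempty
  have hdiff : ∀ p ∈ U, DifferentiableAt ℝ f p := fun p hp =>
    (hf.differentiableOn (by simp) p hp).differentiableAt (hUopen.mem_nhds hp)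
  obtain ⟨aA, aB, aC, hA⟩ := hpush vfA (Set.mem_insert _ _)
  obtain ⟨bA, bB, bC, hB⟩ := hpush vfB (Set.mem_insert_iff.mpr (Or.inr (Set.mem_insert _ _)))
  have hU2 : ∀ p ∈ U, (0:ℝ) < p.2 := fun p hp => hUH hp
  have hV2 : ∀ p ∈ U, (0:ℝ) < (f p).2 := fun p hp => hVH (hmaps hp)
  have hC1 : ∀ p ∈ U, fderiv ℝ f p (1, 0) = (1, 0) := fun p hp => hC p hp
  -- relation from B
  have keyB : ∀ p ∈ U, p.2 = bB * (f p).2 + bC := by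
    intro p hp
    have h1 := hB p hp
    have h2 : fderiv ℝ f p (vfB p) = p.2 • fderiv ℝ f p (1, 0) := by
      rw [← map_smul]
      congr 1
      simp [vfB]
    rw [h2, hC1 p hp] at h1
    have h3 := congrArg Prod.fst h1
    simpa [vfA, vfB, vfC] using h3
  -- derivative of keyB
  have keyB' : ∀ p ∈ U, bB * (fderiv ℝ f p (0, 1)).2 = 1 := by
    intro p hp
    have hsnd : HasFDerivAt (fun q : ℝ × ℝ => (f q).2)
        ((ContinuousLinearMap.snd ℝ ℝ ℝ).comp (fderiv ℝ f p)) p :=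
      (ContinuousLinearMap.snd ℝ ℝ ℝ).hasFDerivAt.comp p (hdiff p hp).hasFDerivAt
    have hφ : HasFDerivAt (fun q : ℝ × ℝ => bB * (f q).2 + bC - q.2)
        (bB • ((ContinuousLinearMap.snd ℝ ℝ ℝ).comp (fderiv ℝ f p))
          - ContinuousLinearMap.snd ℝ ℝ ℝ) p :=
      ((hsnd.const_mul bB).add_const bC).sub (hasFDerivAt_snd (𝕜 := ℝ) (E := ℝ) (F := ℝ))
    have hzero : HasFDerivAt (fun q : ℝ × ℝ => bB * (f q).2 + bC - q.2)
        (0 : (ℝ × ℝ) →L[ℝ] ℝ) p := by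
      have hev : (fun q : ℝ × ℝ => bB * (f q).2 + bC - q.2) =ᶠ[nhds p] fun _ => 0 := by
        filter_upwards [hUopen.mem_nhds hp] with q hq
        have := keyB q hq; linarith
      exact (hasFDerivAt_const (0:ℝ) p).congr_of_eventuallyEq hev
    have heq := hφ.unique hzero
    have h4 := DFunLike.congr_fun heq ((0 : ℝ), (1 : ℝ))
    simp only [ContinuousLinearMap.sub_apply, ContinuousLinearMap.smul_apply,
      ContinuousLinearMap.coe_comp', Function.comp_apply, ContinuousLinearMap.coe_snd',
      ContinuousLinearMap.zero_apply, smul_eq_mul] at h4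
    linarith
  -- relations from A
  have keyA : ∀ p ∈ U,
      p.2 * (fderiv ℝ f p (0, 1)).1 = aB * (f p).2 + aC ∧
      p.2 * (fderiv ℝ f p (0, 1)).2 = aA * (f p).2 := by
    intro p hp
    have h1 := hA p hp
    have h2 : fderiv ℝ f p (vfA p) = p.2 • fderiv ℝ f p (0, 1) := by
      rw [← map_smul]
      congr 1
      simp [vfA]
    rw [h2] at h1
    constructor
    · have h3 := congrArg Prod.fst h1
      simpa [vfA, vfB, vfC] using h3
    · have h3 := congrArg Prod.snd h1
      simpa [vfA, vfB, vfC] using h3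
  -- a second point with different y-coordinate
  obtain ⟨ε, hε, hball⟩ := Metric.isOpen_iff.mp hUopen p₀ hp₀
  have hq : ((p₀.1, p₀.2 + ε/2) : ℝ × ℝ) ∈ U := by
    apply hball
    rw [Metric.mem_ball, Prod.dist_eq]
    have h1 : dist (p₀.1) (p₀.1) = 0 := by simp
    have h2 : dist (p₀.2 + ε/2) (p₀.2) = ε/2 := by
      rw [Real.dist_eq]
      rw [abs_of_nonneg (by linarith)]
      ring
    simp only [h1, h2]
    rw [max_eq_right (by linarith)]
    linarith
  have hbB : bB ≠ 0 := by
    intro h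
    have h1 := keyB' p₀ hp₀
    rw [h] at h1; simp at h1
  have hee : ∀ p ∈ U, p.2 = aA * (p.2 - bC) := by
    intro p hp
    have k1 := keyB p hp
    have k2 := keyB' p hp
    have k3 := (keyA p hp).2
    linear_combination (-p.2) * k2 + bB * k3 + (-aA) * k1
  have haA : aA = 1 := by
    have h1 := hee p₀ hp₀
    have h2 := hee (p₀.1, p₀.2 + ε/2) hq
    simp only at h2
    have h4 : (aA - 1) * (ε/2) = 0 := by linear_combination h1 - h2
    rcases mul_eq_zero.mp h4 with h | h
    · linarith
    · linarith
  have hbC : bC = 0 := by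
    have h1 := hee p₀ hp₀
    rw [haA] at h1; linarith
  have hfp2 : ∀ p ∈ U, (f p).2 = p.2 / bB := by
    intro p hp
    have h1 := keyB p hp
    rw [hbC] at h1
    rw [eq_div_iff hbB]
    linear_combination -h1
  have hbBpos : 0 < bB := by
    have h2 := hV2 p₀ hp₀
    rw [hfp2 p₀ hp₀] at h2
    have h0 := hU2 p₀ hp₀
    rcases div_pos_iff.mp h2 with ⟨_, h⟩ | ⟨h, _⟩
    · exact h
    · linarith
  set α := -Real.log bB with hα
  have hexp : Real.exp α = 1 / bB := by
    rw [hα, Real.exp_neg, Real.exp_log hbBpos, one_div]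
  set β := aB / bB with hβ
  set γ := aC with hγ
  -- full derivative in the (0,1) direction
  have hd : ∀ p ∈ U, fderiv ℝ f p (0, 1) = (β + γ / p.2, Real.exp α) := by
    intro p hp
    have hp2 := hU2 p hp
    have hy : p.2 ≠ 0 := ne_of_gt hp2
    have k1 := (keyA p hp).1
    have k2 := keyB' p hp
    have hv : (f p).2 * bB = p.2 := by
      rw [hfp2 p hp]; field_simp
    rw [Prod.ext_iff]
    constructor
    · show (fderiv ℝ f p (0, 1)).1 = β + γ / p.2
      rw [hβ, hγ]
      field_simp
      linear_combination bB * k1 + aB * hv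
    · show (fderiv ℝ f p (0, 1)).2 = Real.exp α
      rw [hexp]
      field_simp
      linear_combination k2
  -- constancy of the first coordinate discrepancy
  set τ := (f p₀).1 - (p₀.1 + β * p₀.2 + γ * Real.log p₀.2) with hτ
  have hφ0 : ∀ p ∈ U, HasFDerivAt
      (fun q : ℝ × ℝ => (f q).1 - (q.1 + β * q.2 + γ * Real.log q.2))
      (0 : (ℝ × ℝ) →L[ℝ] ℝ) p := by
    intro p hp
    have hp2 := hU2 p hp
    have hfst : HasFDerivAt (fun q : ℝ × ℝ => (f q).1)
        ((ContinuousLinearMap.fst ℝ ℝ ℝ).comp (fderiv ℝ f p)) p :=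
      (ContinuousLinearMap.fst ℝ ℝ ℝ).hasFDerivAt.comp p (hdiff p hp).hasFDerivAt
    have hlog : HasFDerivAt (fun q : ℝ × ℝ => Real.log q.2)
        (p.2⁻¹ • ContinuousLinearMap.snd ℝ ℝ ℝ) p :=
      (Real.hasDerivAt_log (ne_of_gt hp2)).comp_hasFDerivAt p (hasFDerivAt_snd (𝕜 := ℝ) (E := ℝ) (F := ℝ))
    have hrhs : HasFDerivAt (fun q : ℝ × ℝ => q.1 + β * q.2 + γ * Real.log q.2)
        ((ContinuousLinearMap.fst ℝ ℝ ℝ) + β • ContinuousLinearMap.snd ℝ ℝ ℝ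
          + γ • (p.2⁻¹ • ContinuousLinearMap.snd ℝ ℝ ℝ)) p := by
      have h1 := ((hasFDerivAt_fst (𝕜 := ℝ) (E := ℝ) (F := ℝ)).add ((hasFDerivAt_snd (𝕜 := ℝ) (E := ℝ) (F := ℝ)).const_mul β)).add (hlog.const_mul γ)
      exact h1
    have htot := hfst.sub hrhs
    have hM : (ContinuousLinearMap.fst ℝ ℝ ℝ).comp (fderiv ℝ f p)
        - ((ContinuousLinearMap.fst ℝ ℝ ℝ) + β • ContinuousLinearMap.snd ℝ ℝ ℝ
          + γ • (p.2⁻¹ • ContinuousLinearMap.snd ℝ ℝ ℝ)) = 0 := by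
      apply clm_ext2
      · simp [hC1 p hp]
      · simp [hd p hp]
        field_simp
        ring
    rw [hM] at htot
    exact htot
  have hconst := const_of_zero_fderiv hUopen hUconn.isPreconnected hφ0 hp₀
  -- the formula holds
  have hex : ∀ p ∈ U,
      f p = (p.1 + β * p.2 + γ * Real.log p.2 + τ, Real.exp α * p.2) := by
    intro p hp
    have h1 := hconst p hp
    rw [Prod.ext_iff]
    constructor
    · show (f p).1 = p.1 + β * p.2 + γ * Real.log p.2 + τ
      linarith [h1, hτ]
    · show (f p).2 = Real.exp α * p.2
      rw [hfp2 p hp, hexp]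
      ring
  refine ⟨(α, β, γ, τ), hex, ?_⟩
  rintro ⟨a', b', c', d'⟩ hw'
  -- uniqueness
  set δ := min (ε/2) (p₀.2/2) with hδ
  have hp₀2 := hU2 p₀ hp₀
  have hδpos : 0 < δ := lt_min (by linarith) (by linarith)
  have hδy : δ < p₀.2 := lt_of_le_of_lt (min_le_right _ _) (by linarith)
  have hmem : ∀ y ∈ Set.Ioo (p₀.2 - δ) (p₀.2 + δ), ((p₀.1, y) : ℝ × ℝ) ∈ U := by
    intro y hy'
    apply hball
    rw [Metric.mem_ball, Prod.dist_eq]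
    have h1 : dist (p₀.1) (p₀.1) = 0 := by simp
    have h2 : dist y p₀.2 < ε := by
      rw [Real.dist_eq, abs_sub_lt_iff]
      have := hy'.1; have := hy'.2
      have hδε : δ ≤ ε/2 := min_le_left _ _
      constructor <;> linarith
    simp only [h1]
    rw [max_eq_right dist_nonneg]
    exact h2
  have heq2 : ∀ y ∈ Set.Ioo (p₀.2 - δ) (p₀.2 + δ),
      (p₀.1 + b' * y + c' * Real.log y + d', Real.exp a' * y)
        = (p₀.1 + β * y + γ * Real.log y + τ, Real.exp α * y) := by
    intro y hy'
    have h1 := hw' (p₀.1, y) (hmem y hy')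
    have h2 := hex (p₀.1, y) (hmem y hy')
    simp only at h1 h2
    rw [← h1, ← h2]
  have ha' : a' = α := by
    have h1 := (Prod.ext_iff.mp (heq2 p₀.2 ⟨by linarith, by linarith⟩)).2
    simp only at h1
    have hne : p₀.2 ≠ 0 := ne_of_gt hp₀2
    have h2 : Real.exp a' * p₀.2 = Real.exp α * p₀.2 := h1
    have h3 : Real.exp a' = Real.exp α := mul_right_cancel₀ hne h2
    exact Real.exp_eq_exp.mp h3
  have hfirst : ∀ y ∈ Set.Ioo (p₀.2 - δ) (p₀.2 + δ),
      (b' - β) * y + (c' - γ) * Real.log y + (d' - τ) = 0 := by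
    intro y hy'
    have h1 := (Prod.ext_iff.mp (heq2 y hy')).1
    simp only at h1
    linarith
  obtain ⟨hb', hc', hd'⟩ := aux_indep hp₀2 hδpos hδy hfirst
  have hb2 : b' = β := by linarith
  have hc2 : c' = γ := by linarith
  have hd2 : d' = τ := by linarith
  rw [ha', hb2, hc2, hd2]
end
end

section
/- Let g₀ = g_{α₀,β₀,γ₀,τ₀} ∈ G with α₀ ≠ 0. Then the centralizer of g₀ in G is exactly the set L = { g_{α, β₀(e^α − 1)/(e^{α₀} − 1), (γ₀/α₀)·α, τ} : α, τ ∈ ℝ }, and L is an abelian subgroup of G (isomorphic to ℝ², parametrized by (α, τ)). -/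
noncomputable section

/-- The map `g_{α,β,γ,τ} : (x,y) ↦ (x + βy + γ·log y + τ, e^α·y)`. -/
def gmap (α β γ τ : ℝ) (p : ℝ × ℝ) : ℝ × ℝ :=
  (p.1 + β * p.2 + γ * Real.log p.2 + τ, Real.exp α * p.2)

/-- The upper half-plane as a type. -/
abbrev Hsub := {p : ℝ × ℝ // 0 < p.2}

/-- A permutation of `ℍ⁺` is given by `g_{α,β,γ,τ}`. -/
def IsG (e : Equiv.Perm Hsub) (α β γ τ : ℝ) : Prop :=
  ∀ p : Hsub, (e p : ℝ × ℝ) = gmap α β γ τ (p : ℝ × ℝ)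

/-- The group `G` of all `g_{α,β,γ,τ}`, as a set of permutations of `ℍ⁺`. -/
def GSet : Set (Equiv.Perm Hsub) := {e | ∃ α β γ τ : ℝ, IsG e α β γ τ}

/-- The set `L = { g_{α, β₀(e^α-1)/(e^{α₀}-1), (γ₀/α₀)α, τ} : α, τ ∈ ℝ }`. -/
def LSet (α₀ β₀ γ₀ : ℝ) : Set (Equiv.Perm Hsub) :=
  {e | ∃ α τ : ℝ,
    IsG e α (β₀ * (Real.exp α - 1) / (Real.exp α₀ - 1)) (γ₀ / α₀ * α) τ}

/-! By the composition law, `g = g_{α,β,γ,τ}` commutes with `g₀` iff the `β`- and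
`τ`-components of `g ∘ g₀` and `g₀ ∘ g` agree (the parameters of an element of `G` being unique),
i.e. `β₀ + β e^{α₀} = β + β₀ e^α` and `γ α₀ = γ₀ α`. For `α₀ ≠ 0` these equations solve to the
parameters of `L`. Finally `L` is the image of the injective homomorphism
`(α, t) ↦ g_{α, k(e^α - 1), cα, t + cα²/2}` from `ℝ²`. -/

lemma gmap_comp (α β γ τ α' β' γ' τ' : ℝ) {p : ℝ × ℝ} (hp : 0 < p.2) :
    gmap α β γ τ (gmap α' β' γ' τ' p)
      = gmap (α + α') (β' + β * Real.exp α') (γ + γ') (τ + τ' + γ * α') p := by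
  have hlog : Real.log (Real.exp α' * p.2) = α' + Real.log p.2 := by
    rw [Real.log_mul (Real.exp_ne_zero α') hp.ne', Real.log_exp]
  simp only [gmap, hlog, Real.exp_add, Prod.mk.injEq]
  constructor <;> ring

lemma gmap_zero (p : ℝ × ℝ) : gmap 0 0 0 0 p = p := by
  simp [gmap]

def gperm (α β γ τ : ℝ) : Equiv.Perm Hsub where
  toFun p := ⟨gmap α β γ τ p, mul_pos (Real.exp_pos α) p.2⟩
  invFun p := ⟨gmap (-α) (-β * Real.exp (-α)) (-γ) (-τ + γ * α) p, mul_pos (Real.exp_pos _) p.2⟩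
  left_inv p := Subtype.ext <| by
    show gmap _ _ _ _ (gmap _ _ _ _ p.1) = p.1
    rw [gmap_comp _ _ _ _ _ _ _ _ p.2, mul_assoc, ← Real.exp_add]
    convert gmap_zero p.1 using 2 <;> simp
  right_inv p := Subtype.ext <| by
    show gmap _ _ _ _ (gmap _ _ _ _ p.1) = p.1
    rw [gmap_comp _ _ _ _ _ _ _ _ p.2]
    convert gmap_zero p.1 using 2 <;> ring

lemma isG_gperm (α β γ τ : ℝ) : IsG (gperm α β γ τ) α β γ τ := fun _ => rfl

namespace IsG

variable {e e' : Equiv.Perm Hsub} {α β γ τ α' β' γ' τ' : ℝ}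

lemma perm_eq (h : IsG e α β γ τ) (h' : IsG e' α β γ τ) : e = e' :=
  Equiv.ext fun p => Subtype.ext ((h p).trans (h' p).symm)

lemma mul (h : IsG e α β γ τ) (h' : IsG e' α' β' γ' τ') :
    IsG (e * e') (α + α') (β' + β * Real.exp α') (γ + γ') (τ + τ' + γ * α') := fun p => by
  rw [Equiv.Perm.mul_apply, h, h', gmap_comp _ _ _ _ _ _ _ _ p.2]

/-- Evaluating at `(0, 1)`, `(0, e)`, `(0, e²)` recovers the parameters. -/
lemma params_eq (h : IsG e α β γ τ) (h' : IsG e α' β' γ' τ') :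
    α = α' ∧ β = β' ∧ γ = γ' ∧ τ = τ' := by
  have hE : Real.exp 1 - 1 ≠ 0 := sub_ne_zero.mpr (by simp)
  have at_exp (n : ℕ) := (h ⟨(0, Real.exp n), Real.exp_pos _⟩).symm.trans
    (h' ⟨(0, Real.exp n), Real.exp_pos _⟩)
  obtain ⟨x₀, y₀⟩ := Prod.mk.inj (at_exp 0)
  obtain ⟨x₁, -⟩ := Prod.mk.inj (at_exp 1)
  obtain ⟨x₂, -⟩ := Prod.mk.inj (at_exp 2)
  simp only [Nat.cast_ofNat, Nat.cast_one, Nat.cast_zero, Real.exp_zero, Real.log_exp, Real.log_one,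
    zero_add, mul_one, mul_zero, add_zero] at x₀ y₀ x₁ x₂
  rw [show (2 : ℝ) = 1 + 1 by norm_num, Real.exp_add] at x₂
  have hβ : β = β' := by
    have : (β - β') * (Real.exp 1 - 1) ^ 2 = 0 := by linear_combination x₂ - 2 * x₁ + x₀
    simpa [sub_eq_zero, hE] using this
  refine ⟨Real.exp_injective y₀, hβ, ?_, ?_⟩
  · linear_combination x₁ - x₀ + (1 - Real.exp 1) * hβ
  · linear_combination x₀ - hβ

lemma commute_iff (h : IsG e α β γ τ) (h' : IsG e' α' β' γ' τ') :
    e * e' = e' * e ↔ β' + β * Real.exp α' = β + β' * Real.exp α ∧ γ * α' = γ' * α := by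
  constructor
  · intro hcomm
    obtain ⟨-, hβ, -, hτ⟩ := (hcomm ▸ h.mul h').params_eq (h'.mul h)
    exact ⟨hβ, by linear_combination hτ⟩
  · rintro ⟨hβ, hγ⟩
    refine (h.mul h').perm_eq ?_
    rw [hβ]
    convert h'.mul h using 1
    · ring
    · ring
    · linear_combination hγ

end IsG

/-- The shift `c α² / 2` of `τ` absorbs the cross term `γ α'` of the composition law. -/
def lineHom (k c : ℝ) : Multiplicative (ℝ × ℝ) →* Equiv.Perm Hsub where
  toFun q := gperm q.toAdd.1 (k * (Real.exp q.toAdd.1 - 1)) (c * q.toAdd.1)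
    (q.toAdd.2 + c * q.toAdd.1 ^ 2 / 2)
  map_one' := (isG_gperm _ _ _ _).perm_eq fun p => by simp [gmap_zero]
  map_mul' a b := by
    refine (isG_gperm _ _ _ _).perm_eq ?_
    convert (isG_gperm _ _ _ _).mul (isG_gperm _ _ _ _) using 1
    all_goals simp only [toAdd_mul, Prod.fst_add, Prod.snd_add, Real.exp_add] <;> ring

lemma isG_lineHom (k c : ℝ) (q : Multiplicative (ℝ × ℝ)) :
    IsG (lineHom k c q) q.toAdd.1 (k * (Real.exp q.toAdd.1 - 1)) (c * q.toAdd.1)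
      (q.toAdd.2 + c * q.toAdd.1 ^ 2 / 2) :=
  fun _ => rfl

lemma lineHom_injective (k c : ℝ) : Function.Injective (lineHom k c) := by
  intro a b hab
  obtain ⟨h₁, -, -, h₂⟩ := (hab ▸ isG_lineHom k c a).params_eq (isG_lineHom k c b)
  exact Multiplicative.toAdd.injective (Prod.ext h₁ (by rw [h₁] at h₂; linarith))

lemma coe_range_lineHom (k c : ℝ) :
    ((lineHom k c).range : Set (Equiv.Perm Hsub))
      = {e | ∃ α τ : ℝ, IsG e α (k * (Real.exp α - 1)) (c * α) τ} := by
  ext e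
  constructor
  · rintro ⟨q, rfl⟩
    exact ⟨_, _, isG_lineHom k c q⟩
  · rintro ⟨α, τ, he⟩
    refine ⟨Multiplicative.ofAdd (α, τ - c * α ^ 2 / 2), (isG_lineHom k c _).perm_eq ?_⟩
    convert he using 1 <;> simp only [toAdd_ofAdd]
    ring

lemma LSet_eq_range_lineHom (α₀ β₀ γ₀ : ℝ) :
    LSet α₀ β₀ γ₀ = (lineHom (β₀ / (Real.exp α₀ - 1)) (γ₀ / α₀)).range := by
  simp only [coe_range_lineHom, div_mul_eq_mul_div, LSet]

lemma setOf_commute_eq_LSet {α₀ β₀ γ₀ τ₀ : ℝ} (hα₀ : α₀ ≠ 0) {g₀ : Equiv.Perm Hsub}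
    (hg₀ : IsG g₀ α₀ β₀ γ₀ τ₀) : {e ∈ GSet | e * g₀ = g₀ * e} = LSet α₀ β₀ γ₀ := by
  have hD : Real.exp α₀ - 1 ≠ 0 := sub_ne_zero.mpr (by simpa using hα₀)
  ext e
  constructor
  · rintro ⟨⟨α, β, γ, τ, he⟩, hcomm⟩
    obtain ⟨hβ, hγ⟩ := (he.commute_iff hg₀).1 hcomm
    refine ⟨α, τ, ?_⟩
    convert he using 2
    · field_simp; linear_combination -hβ
    · field_simp; linear_combination -hγ
  · rintro ⟨α, τ, he⟩
    refine ⟨⟨_, _, _, _, he⟩, (he.commute_iff hg₀).2 ⟨?_, ?_⟩⟩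
    · field_simp; ring
    · field_simp

theorem stmt5 (α₀ β₀ γ₀ τ₀ : ℝ) (hα₀ : α₀ ≠ 0)
    (g₀ : Equiv.Perm Hsub) (hg₀ : IsG g₀ α₀ β₀ γ₀ τ₀) :
    -- the centralizer of `g₀` in `G` is exactly `L`
    {e ∈ GSet | e * g₀ = g₀ * e} = LSet α₀ β₀ γ₀ ∧
    -- `L` is an abelian subgroup of `G`, isomorphic to `ℝ²`
    (∃ L : Subgroup (Equiv.Perm Hsub),
      (L : Set (Equiv.Perm Hsub)) = LSet α₀ β₀ γ₀ ∧
      (∀ a ∈ L, ∀ b ∈ L, a * b = b * a) ∧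
      Nonempty (Multiplicative (ℝ × ℝ) ≃* L)) := by
  refine ⟨setOf_commute_eq_LSet hα₀ hg₀, _, (LSet_eq_range_lineHom α₀ β₀ γ₀).symm, ?_,
    ⟨MonoidHom.ofInjective (lineHom_injective _ _)⟩⟩
  rintro _ ⟨a, rfl⟩ _ ⟨b, rfl⟩
  rw [← map_mul, ← map_mul, mul_comm]
end
end

section
/- Let B be the real 3×3 matrix [[0,1,0],[0,0,1],[0,0,0]], let G be a symmetric nondegenerate real 3×3 matrix, and let α ∈ ℝ be such that Bᵀ·G + G·B = α·G. Then α = 0 and there exist real numbers β ≠ 0 and γ such that G = [[0, 0, −β], [0, β, 0], [−β, 0, γ]]. If moreover G has Lorentzian signature (1,2) (one negative and two positive eigenvalues), then β > 0. -/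
/-!
Multiplying the equation on the left by `G⁻¹` gives `G⁻¹ Bᵀ G + B = α • 1`, and taking traces
gives `3 α = 2 tr B = 0`. With `α = 0` the `(i, j)` entry of the equation reads
`G (i-1) j + G i (j-1) = 0`, which together with the symmetry of `G` forces the stated shape,
with `β = G 1 1`. That matrix has determinant `-β³`; in signature `(1,2)` the determinant, as the
product of the eigenvalues, is negative, so `β > 0`.
-/

open Matrix

noncomputable section

/-- The nilpotent single Jordan block of size 3. -/
def Bmat : Matrix (Fin 3) (Fin 3) ℝ := !![0, 1, 0; 0, 0, 1; 0, 0, 0]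

namespace Matrix

theorem mul_card_eq_two_mul_trace_of_transpose_mul_add_mul_eq_smul {n R : Type*} [Fintype n]
    [DecidableEq n] [CommRing R] {B G : Matrix n n R} {α : R} (hG : IsUnit G.det)
    (h : Bᵀ * G + G * B = α • G) : α * Fintype.card n = 2 * B.trace := by
  have htr := congrArg (fun M => trace (G⁻¹ * M)) h
  simp only [Matrix.mul_add, trace_add, Matrix.mul_smul, trace_smul, smul_eq_mul] at htr
  rw [← Matrix.mul_assoc, ← Matrix.mul_assoc, trace_mul_cycle, nonsing_inv_mul _ hG,
    mul_nonsing_inv _ hG, Matrix.one_mul, Matrix.one_mul, trace_transpose, trace_one] at htr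
  rw [← htr, two_mul]

theorem IsHermitian.det_neg_of_eigenvalues_neg_of_pos {n : Type*} [Fintype n] [DecidableEq n]
    {G : Matrix n n ℝ} (hG : G.IsHermitian) {i : n} (hi : hG.eigenvalues i < 0)
    (hpos : ∀ j, j ≠ i → 0 < hG.eigenvalues j) : G.det < 0 := by
  rw [hG.det_eq_prod_eigenvalues, ← Finset.mul_prod_erase _ _ (Finset.mem_univ i)]
  exact mul_neg_of_neg_of_pos (by simpa using hi)
    (Finset.prod_pos fun j hj => by simpa using hpos j (Finset.ne_of_mem_erase hj))

theorem det_fin_three_of_antidiagonal_shape {R : Type*} [CommRing R] (β γ : R) :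
    (!![0, 0, -β; 0, β, 0; -β, 0, γ] : Matrix (Fin 3) (Fin 3) R).det = -β ^ 3 := by
  simp [det_fin_three]; ring

end Matrix

theorem eq_of_transpose_Bmat_mul_add_mul_Bmat_eq_zero {G : Matrix (Fin 3) (Fin 3) ℝ}
    (hG : G.IsSymm) (h : Bmatᵀ * G + G * Bmat = 0) :
    G = !![0, 0, -G 1 1; 0, G 1 1, 0; -G 1 1, 0, G 2 2] := by
  have entry : ∀ i j, (Bmatᵀ * G + G * Bmat) i j = 0 := fun i j => by rw [h]; rfl
  have e01 : G 0 0 = 0 := by simpa [Bmat, mul_apply, Fin.sum_univ_three] using entry 0 1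
  have e02 : G 0 1 = 0 := by simpa [Bmat, mul_apply, Fin.sum_univ_three] using entry 0 2
  have e12 : G 0 2 + G 1 1 = 0 := by simpa [Bmat, mul_apply, Fin.sum_univ_three] using entry 1 2
  have e22 : G 1 2 + G 2 1 = 0 := by simpa [Bmat, mul_apply, Fin.sum_univ_three] using entry 2 2
  have s01 : G 1 0 = G 0 1 := hG.apply 0 1
  have s02 : G 2 0 = G 0 2 := hG.apply 0 2
  have s12 : G 2 1 = G 1 2 := hG.apply 1 2
  ext i j
  fin_cases i <;> fin_cases j <;>
    simp only [Fin.zero_eta, Fin.mk_one, Fin.reduceFinMk, Fin.isValue, of_apply, cons_val',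
      cons_val, cons_val_zero, cons_val_one, cons_val_fin_one] <;>
    linarith

theorem stmt6 (G : Matrix (Fin 3) (Fin 3) ℝ) (hsymm : G.IsHermitian)
    (hnd : G.det ≠ 0) (α : ℝ) (heq : Bmatᵀ * G + G * Bmat = α • G) :
    α = 0 ∧
    ∃ β γ : ℝ, β ≠ 0 ∧ G = !![0, 0, -β; 0, β, 0; -β, 0, γ] ∧
      -- if `G` has Lorentzian signature (1,2), i.e. one negative and two
      -- positive eigenvalues, then `β > 0`
      ((∃ i : Fin 3, hsymm.eigenvalues i < 0 ∧
          ∀ j : Fin 3, j ≠ i → 0 < hsymm.eigenvalues j) → 0 < β) := by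
  have hα : α = 0 := by
    have htr := mul_card_eq_two_mul_trace_of_transpose_mul_add_mul_eq_smul hnd.isUnit heq
    simpa [Bmat, trace_fin_three] using htr
  subst hα
  have hG := eq_of_transpose_Bmat_mul_add_mul_Bmat_eq_zero (isHermitian_iff_isSymm.mp hsymm)
    (by rwa [zero_smul] at heq)
  set β := G 1 1
  set γ := G 2 2
  have hdet : G.det = -β ^ 3 := by rw [hG]; exact det_fin_three_of_antidiagonal_shape β γ
  refine ⟨rfl, β, γ, fun hβ => hnd (by rw [hdet, hβ]; ring), hG, ?_⟩
  rintro ⟨i, hi, hpos⟩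
  have hneg := hsymm.det_neg_of_eigenvalues_neg_of_pos hi hpos
  exact (Odd.pow_pos_iff (n := 3) (by decide)).mp (by linarith)
end
end

section
/- 𝔠𝔬(1,2) is a Lie subalgebra of the 3×3 real matrices under the commutator bracket, and every 2-dimensional abelian Lie subalgebra of 𝔠𝔬(1,2) contains the identity matrix I (equivalently, contains the line ℝ·I of scalar matrices, which is the center of 𝔠𝔬(1,2)). -/
open Matrix

attribute [local instance 100] LieRing.ofAssociativeRing

noncomputable section

/-- The matrix of the Lorentzian form `q(x) = 2x₁x₃ + x₂²` on `ℝ³`. -/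
def Jmat : Matrix (Fin 3) (Fin 3) ℝ := !![0, 0, 1; 0, 1, 0; 1, 0, 0]

/-- The conformal Lie algebra `𝔠𝔬(1,2)`: matrices `A` with `Aᵀ·J + J·A = α·J`. -/
def co12 : Set (Matrix (Fin 3) (Fin 3) ℝ) :=
  {A | ∃ α : ℝ, Aᵀ * Jmat + Jmat * A = α • Jmat}

/-!
Closure under brackets: `Aᵀ J + J A = α J` says `Aᵀ J = J (α - A)`, transposition reverses
products, and shifting by scalars does not change a commutator, so `⁅A, B⁆ᵀ J = -J ⁅A, B⁆`.

Every `A ∈ 𝔠𝔬(1,2)` is `A 1 1 • 1` plus a matrix of `𝔰𝔬(1,2)` determined by three coordinates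
`co12Coords A`, and on these coordinates the commutator is the cross product. Two commuting
elements therefore have proportional coordinates, so a 2-dimensional abelian subalgebra contains
a nonzero element with vanishing coordinates, i.e. a nonzero scalar matrix.
-/

namespace Matrix

variable {R n : Type*} [CommRing R] [Fintype n]

theorem transpose_mul_mul_eq_of_transpose_mul_eq {A A' B B' J : Matrix n n R}
    (hA : Aᵀ * J = J * A') (hB : Bᵀ * J = J * B') : (A * B)ᵀ * J = J * (B' * A') := by
  rw [transpose_mul, mul_assoc, hA, ← mul_assoc, hB, mul_assoc]

variable [DecidableEq n]

theorem transpose_mul_add_mul_eq_smul_iff {A J : Matrix n n R} {α : R} :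
    Aᵀ * J + J * A = α • J ↔ Aᵀ * J = J * (α • 1 - A) := by
  rw [mul_sub, mul_smul_comm, mul_one, eq_sub_iff_add_eq]

def conformalLieSubalgebra (J : Matrix n n R) : LieSubalgebra R (Matrix n n R) where
  carrier := {A | ∃ α : R, Aᵀ * J + J * A = α • J}
  zero_mem' := ⟨0, by simp⟩
  add_mem' := by
    rintro A B ⟨α, hA⟩ ⟨β, hB⟩
    refine ⟨α + β, ?_⟩
    rw [transpose_add, add_mul, mul_add, add_smul, ← hA, ← hB]
    abel
  smul_mem' := by
    rintro c A ⟨α, hA⟩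
    refine ⟨c * α, ?_⟩
    rw [transpose_smul, smul_mul_assoc, mul_smul_comm, ← smul_add, hA, smul_smul]
  lie_mem' := by
    rintro A B ⟨α, hA⟩ ⟨β, hB⟩
    rw [transpose_mul_add_mul_eq_smul_iff] at hA hB
    have hshift : (β • 1 - B) * (α • 1 - A) - (α • 1 - A) * (β • 1 - B) = B * A - A * B := by
      simp only [sub_mul, mul_sub, smul_mul_assoc, mul_smul_comm, one_mul, mul_one]
      module
    refine ⟨0, ?_⟩
    rw [Ring.lie_def, transpose_sub, sub_mul, transpose_mul_mul_eq_of_transpose_mul_eq hA hB,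
      transpose_mul_mul_eq_of_transpose_mul_eq hB hA, ← mul_sub, hshift, zero_smul, ← mul_add]
    simp

end Matrix

theorem co12_entries {A : Matrix (Fin 3) (Fin 3) ℝ} (hA : A ∈ co12) :
    A 2 0 = 0 ∧ A 0 2 = 0 ∧ A 2 1 = -A 1 0 ∧ A 1 2 = -A 0 1 ∧ A 2 2 = 2 * A 1 1 - A 0 0 := by
  obtain ⟨α, h⟩ := hA
  have e : ∀ i j, (Aᵀ * Jmat + Jmat * A) i j = (α • Jmat) i j := fun i j => by rw [h]
  have e00 := e 0 0; have e11 := e 1 1; have e22 := e 2 2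
  have e01 := e 0 1; have e02 := e 0 2; have e12 := e 1 2
  simp only [Jmat, Matrix.add_apply, mul_apply, transpose_apply, Matrix.smul_apply, smul_eq_mul,
    of_apply, cons_val, Fin.sum_univ_three, mul_zero, mul_one, add_zero, zero_add]
    at e00 e11 e22 e01 e02 e12
  refine ⟨by linarith, by linarith, by linarith, by linarith, by linarith⟩

/-- For `A ∈ co12` with `co12Coords A = ![p, q, r]`,
`A = A 1 1 • 1 + !![p, q, 0; r, 0, -q; 0, -r, -p]`. -/
def co12Coords : Matrix (Fin 3) (Fin 3) ℝ →ₗ[ℝ] Fin 3 → ℝ where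
  toFun A := ![A 0 0 - A 1 1, A 0 1, A 1 0]
  map_add' A B := by ext i; fin_cases i <;> simp; ring
  map_smul' c A := by ext i; fin_cases i <;> simp; ring

theorem co12Coords_apply (A : Matrix (Fin 3) (Fin 3) ℝ) :
    co12Coords A = ![A 0 0 - A 1 1, A 0 1, A 1 0] := rfl

theorem eq_smul_one_of_co12Coords_eq_zero {A : Matrix (Fin 3) (Fin 3) ℝ} (hA : A ∈ co12)
    (h : co12Coords A = 0) : A = A 1 1 • 1 := by
  obtain ⟨h20, h02, h21, h12, h22⟩ := co12_entries hA
  simp only [co12Coords_apply, cons_eq_zero_iff] at h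
  obtain ⟨h00, h01, h10, -⟩ := h
  ext i j
  fin_cases i <;> fin_cases j <;> simp [h20, h02, h21, h12, h22, h01, h10] <;> linarith

theorem cross_co12Coords_eq_zero_of_commute {A B : Matrix (Fin 3) (Fin 3) ℝ} (hA : A ∈ co12)
    (hB : B ∈ co12) (hAB : A * B = B * A) : co12Coords A ⨯₃ co12Coords B = 0 := by
  obtain ⟨hA20, hA02, -⟩ := co12_entries hA
  obtain ⟨hB20, hB02, -⟩ := co12_entries hB
  -- the entries (0,0), (1,0), (0,1) of `A * B - B * A` are the components of the cross product
  have e : ∀ i j, (A * B) i j = (B * A) i j := fun i j => by rw [hAB]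
  have e00 := e 0 0; have e01 := e 0 1; have e10 := e 1 0
  simp only [mul_apply, Fin.sum_univ_three, hA20, hA02, hB20, hB02, mul_zero, zero_mul,
    add_zero] at e00 e01 e10
  simp only [co12Coords_apply, cross_apply, cons_val, cons_eq_zero_iff]
  refine ⟨?_, ?_, ?_, Subsingleton.elim _ _⟩
  · linear_combination e00
  · linear_combination e10
  · linear_combination e01

theorem ker_co12Coords_comp_subtype_eq_bot {S : Submodule ℝ (Matrix (Fin 3) (Fin 3) ℝ)}
    (hS : (S : Set (Matrix (Fin 3) (Fin 3) ℝ)) ⊆ co12) (hone : (1 : Matrix (Fin 3) (Fin 3) ℝ) ∉ S) :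
    LinearMap.ker (co12Coords ∘ₗ S.subtype) = ⊥ := by
  refine LinearMap.ker_eq_bot'.mpr fun A hA => ?_
  set c := (A : Matrix (Fin 3) (Fin 3) ℝ) 1 1
  have hscalar : (A : Matrix (Fin 3) (Fin 3) ℝ) = c • 1 :=
    eq_smul_one_of_co12Coords_eq_zero (hS A.2) hA
  by_cases hc : c = 0
  · exact Subtype.ext (by rw [hscalar, hc, zero_smul]; rfl)
  · have hmem := S.smul_mem c⁻¹ A.2
    rw [hscalar, smul_smul, inv_mul_cancel₀ hc, one_smul] at hmem
    exact absurd hmem hone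

theorem one_mem_of_subset_co12_of_finrank_eq_two (L : LieSubalgebra ℝ (Matrix (Fin 3) (Fin 3) ℝ))
    (hL : (L : Set (Matrix (Fin 3) (Fin 3) ℝ)) ⊆ co12) (hrank : Module.finrank ℝ L = 2)
    (hcomm : ∀ X ∈ L, ∀ Y ∈ L, X * Y = Y * X) : (1 : Matrix (Fin 3) (Fin 3) ℝ) ∈ L := by
  by_contra hone
  let f : L →ₗ[ℝ] Fin 3 → ℝ := co12Coords ∘ₗ L.toSubmodule.subtype
  let b := Module.finBasisOfFinrankEq ℝ L hrank
  have hli : LinearIndependent ℝ ![f (b 0), f (b 1)] := by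
    have hfb : f ∘ b = ![f (b 0), f (b 1)] := by ext i; fin_cases i <;> rfl
    exact hfb ▸ b.linearIndependent.map' f (ker_co12Coords_comp_subtype_eq_bot hL hone)
  exact crossProduct_ne_zero_iff_linearIndependent.mpr hli <|
    cross_co12Coords_eq_zero_of_commute (hL (b 0).2) (hL (b 1).2) (hcomm _ (b 0).2 _ (b 1).2)

theorem stmt8 :
    -- `𝔠𝔬(1,2)` is a Lie subalgebra of the 3×3 matrices with commutator bracket
    (∃ L : LieSubalgebra ℝ (Matrix (Fin 3) (Fin 3) ℝ),
      (L : Set (Matrix (Fin 3) (Fin 3) ℝ)) = co12) ∧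
    -- every 2-dimensional abelian Lie subalgebra of `𝔠𝔬(1,2)` contains `I`
    (∀ L : LieSubalgebra ℝ (Matrix (Fin 3) (Fin 3) ℝ),
      (L : Set (Matrix (Fin 3) (Fin 3) ℝ)) ⊆ co12 →
      Module.finrank ℝ L = 2 →
      (∀ X ∈ L, ∀ Y ∈ L, X * Y = Y * X) →
      (1 : Matrix (Fin 3) (Fin 3) ℝ) ∈ L) :=
  ⟨⟨Matrix.conformalLieSubalgebra Jmat, rfl⟩, one_mem_of_subset_co12_of_finrank_eq_two⟩
end
end

section
/- Let v ∈ ℝ³ be a spacelike vector (q(v) > 0). Then the annihilator {A ∈ 𝔠𝔬(1,2) : A·v = 0} is 1-dimensional, and every nonzero element A of it satisfies Aᵀ·J + J·A = 0 (i.e. the conformal factor α vanishes) and is diagonalizable over ℝ with eigenvalues λ, 0, −λ for some λ ≠ 0. -/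
open Matrix

noncomputable section

/-- generator of the annihilator of `v` -/
def A0v (v : Fin 3 → ℝ) : Matrix (Fin 3) (Fin 3) ℝ :=
  !![-v 1, v 0, 0; v 2, 0, -v 0; 0, -v 2, v 1]

lemma A0v_skew0 (v : Fin 3 → ℝ) :
    (A0v v)ᵀ * Jmat + Jmat * (A0v v) = 0 := by
  ext i j
  fin_cases i <;> fin_cases j <;>
    simp [A0v, Jmat, Matrix.mul_apply, Matrix.transpose_apply, Fin.sum_univ_three,
      Matrix.vecHead, Matrix.vecTail] <;> ring

lemma A0v_skew (v : Fin 3 → ℝ) (c : ℝ) :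
    (c • A0v v)ᵀ * Jmat + Jmat * (c • A0v v) = (0 : ℝ) • Jmat := by
  rw [Matrix.transpose_smul, Matrix.smul_mul, Matrix.mul_smul, ← smul_add, A0v_skew0,
    smul_zero, zero_smul]

lemma A0v_mulVec (v : Fin 3 → ℝ) (c : ℝ) : (c • A0v v).mulVec v = 0 := by
  funext i
  fin_cases i <;>
    simp [A0v, Matrix.mulVec, dotProduct, Fin.sum_univ_three] <;> ring

lemma classify (v : Fin 3 → ℝ) (hspace : 0 < qF v) (A : Matrix (Fin 3) (Fin 3) ℝ)
    (hco : A ∈ co12) (hm : A.mulVec v = 0) : ∃ c : ℝ, A = c • A0v v := by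
  obtain ⟨α, hA⟩ := hco
  have e00 := congrFun (congrFun hA 0) 0
  have e01 := congrFun (congrFun hA 0) 1
  have e02 := congrFun (congrFun hA 0) 2
  have e11 := congrFun (congrFun hA 1) 1
  have e12 := congrFun (congrFun hA 1) 2
  have e22 := congrFun (congrFun hA 2) 2
  have m0 := congrFun hm 0
  have m1 := congrFun hm 1
  have m2 := congrFun hm 2
  simp [Jmat, Matrix.mul_apply, Fin.sum_univ_three, Matrix.mulVec, Matrix.vecMul,
    Matrix.vecHead, Matrix.vecTail, dotProduct] at e00 e01 e02 e11 e12 e22 m0 m1 m2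
  -- the conformal factor vanishes
  have hq : (2 * v 0 * v 2 + (v 1) ^ 2) ≠ 0 := by
    have : qF v ≠ 0 := ne_of_gt hspace
    simpa [qF] using this
  have hα : α * (2 * v 0 * v 2 + (v 1) ^ 2) = 0 := by
    linear_combination (2 * v 2) * m0 + (2 * v 1) * m1 + (2 * v 0) * m2
      - (2 * v 0 * v 2) * e02 - (v 1 ^ 2) * e11 - (2 * v 1 * v 2) * e12
      - (2 * v 0 * v 1) * e01 - (2 * v 2 ^ 2) * e22 - (2 * v 0 ^ 2) * e00
  have hα0 : α = 0 := by
    rcases mul_eq_zero.mp hα with h | h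
    · exact h
    · exact absurd h hq
  subst hα0
  -- entry structure
  have hA20 : A 2 0 = 0 := e00
  have hA02 : A 0 2 = 0 := e22
  have hA11 : A 1 1 = 0 := by linarith [e11]
  have hA22 : A 2 2 = -A 0 0 := by linarith [e02]
  have hA21 : A 2 1 = -A 1 0 := by linarith [e01]
  have hA12 : A 1 2 = -A 0 1 := by linarith [e12]
  have k1 : A 0 0 * v 0 + A 0 1 * v 1 = 0 := by linear_combination m0 - v 2 * e22
  have k2 : A 1 0 * v 0 - A 0 1 * v 2 = 0 := by
    linear_combination m1 - v 1 * hA11 - v 2 * hA12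
  have k3 : A 1 0 * v 1 + A 0 0 * v 2 = 0 := by
    linear_combination - m2 + v 0 * e00 + v 1 * hA21 + v 2 * hA22
  have hv : v 0 ≠ 0 ∨ v 1 ≠ 0 ∨ v 2 ≠ 0 := by
    by_contra h
    push_neg at h
    obtain ⟨h0, h1, h2⟩ := h
    rw [qF, h0, h1, h2] at hspace
    norm_num at hspace
  have hfin : ∀ c : ℝ, A 0 0 = c * (-v 1) → A 0 1 = c * v 0 → A 1 0 = c * v 2 →
      A = c • A0v v := by
    intro c h1 h2 h3
    ext i j
    fin_cases i <;> fin_cases j <;>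
      simp [A0v, hA20, hA02, hA11, hA22, hA21, hA12, h1, h2, h3] <;> ring
  rcases hv with hv0 | hv1 | hv2
  · refine ⟨A 0 1 / v 0, hfin _ ?_ ?_ ?_⟩
    · field_simp
      linear_combination k1
    · field_simp
    · field_simp
      linear_combination k2
  · refine ⟨-(A 0 0) / v 1, hfin _ ?_ ?_ ?_⟩
    · field_simp
    · field_simp
      linear_combination k1
    · field_simp
      linear_combination k3
  · refine ⟨A 1 0 / v 2, hfin _ ?_ ?_ ?_⟩
    · field_simp
      linear_combination k3
    · field_simp
      linear_combination -k2
    · field_simp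

theorem stmt10 (v : Fin 3 → ℝ) (hspace : 0 < qF v) :
    -- the annihilator of `v` in `𝔠𝔬(1,2)` is 1-dimensional
    (∃ S : Submodule ℝ (Matrix (Fin 3) (Fin 3) ℝ),
      (S : Set (Matrix (Fin 3) (Fin 3) ℝ)) = {A ∈ co12 | A.mulVec v = 0} ∧
      Module.finrank ℝ S = 1) ∧
    -- every nonzero element of the annihilator is skew for `J` and is
    -- ℝ-diagonalizable with eigenvalues `λ, 0, -λ`, `λ ≠ 0`
    (∀ A ∈ co12, A.mulVec v = 0 → A ≠ 0 →
      Aᵀ * Jmat + Jmat * A = 0 ∧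
      ∃ P : Matrix (Fin 3) (Fin 3) ℝ, IsUnit P.det ∧
        ∃ lam : ℝ, lam ≠ 0 ∧ A = P * Matrix.diagonal ![lam, 0, -lam] * P⁻¹) := by
  have hv : v 0 ≠ 0 ∨ v 1 ≠ 0 ∨ v 2 ≠ 0 := by
    by_contra h
    push_neg at h
    obtain ⟨h0, h1, h2⟩ := h
    rw [qF, h0, h1, h2] at hspace
    norm_num at hspace
  have hA0ne : A0v v ≠ 0 := by
    intro h
    rcases hv with hv0 | hv1 | hv2
    · have := congrFun (congrFun h 0) 1
      simp [A0v] at this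
      exact hv0 this
    · have := congrFun (congrFun h 2) 2
      simp [A0v] at this
      exact hv1 this
    · have := congrFun (congrFun h 1) 0
      simp [A0v] at this
      exact hv2 this
  constructor
  · refine ⟨Submodule.span ℝ {A0v v}, ?_, finrank_span_singleton hA0ne⟩
    ext A
    simp only [SetLike.mem_coe, Submodule.mem_span_singleton, Set.mem_setOf_eq, Set.mem_sep_iff]
    constructor
    · rintro ⟨c, rfl⟩
      exact ⟨⟨0, A0v_skew v c⟩, A0v_mulVec v c⟩
    · rintro ⟨hco, hm⟩
      obtain ⟨c, hc⟩ := classify v hspace A hco hm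
      exact ⟨c, hc.symm⟩
  · intro A hco hm hne
    obtain ⟨c, hc⟩ := classify v hspace A hco hm
    have hcne : c ≠ 0 := by
      rintro rfl
      rw [zero_smul] at hc
      exact hne hc
    constructor
    · rw [hc]
      simpa using A0v_skew v c
    · -- diagonalization
      set L : ℝ := Real.sqrt (qF v) with hLdef
      have hLpos : 0 < L := Real.sqrt_pos.mpr hspace
      have hL2 : L ^ 2 = 2 * v 0 * v 2 + v 1 ^ 2 := by
        rw [hLdef, Real.sq_sqrt hspace.le, qF]
      by_cases hv0 : v 0 ≠ 0
      · -- v 0 ≠ 0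
        set Pm : Matrix (Fin 3) (Fin 3) ℝ :=
          !![v 0 ^ 2, v 0, v 0 ^ 2;
             v 0 * (L + v 1), v 1, v 0 * (v 1 - L);
             v 0 * v 2 - L * (L + v 1), v 2, v 0 * v 2 + L * (v 1 - L)] with hPm
        have hdet : Pm.det = 2 * v 0 ^ 2 * L ^ 3 := by
          simp [hPm, Matrix.det_fin_three, Matrix.vecHead, Matrix.vecTail]
          ring
        have hPu : IsUnit Pm.det := by
          rw [hdet]
          exact (mul_ne_zero (mul_ne_zero two_ne_zero (pow_ne_zero 2 hv0))
            (pow_ne_zero 3 hLpos.ne')).isUnit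
        have hAP : A * Pm = Pm * Matrix.diagonal ![c * L, 0, -(c * L)] := by
          rw [hc]
          ext i j
          fin_cases i <;> fin_cases j <;>
            simp [A0v, hPm, Matrix.mul_apply, Fin.sum_univ_three, Matrix.diagonal,
              Matrix.vecHead, Matrix.vecTail] <;>
            try ring
          case _ => linear_combination (c * L) * hL2
          case _ => linear_combination (-(c * L)) * hL2
        refine ⟨Pm, hPu, c * L, mul_ne_zero hcne hLpos.ne', ?_⟩
        calc A = A * Pm * Pm⁻¹ := (Matrix.mul_nonsing_inv_cancel_right Pm A hPu).symm
        _ = Pm * Matrix.diagonal ![c * L, 0, -(c * L)] * Pm⁻¹ := by rw [hAP]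
      · by_cases hv2 : v 2 ≠ 0
        · -- v 2 ≠ 0
          set Pm : Matrix (Fin 3) (Fin 3) ℝ :=
            !![v 0 * v 2 + L * (v 1 - L), v 0, v 0 * v 2 - L * (v 1 + L);
               v 2 * (v 1 - L), v 1, v 2 * (v 1 + L);
               v 2 ^ 2, v 2, v 2 ^ 2] with hPm
          have hdet : Pm.det = 2 * v 2 ^ 2 * L ^ 3 := by
            simp [hPm, Matrix.det_fin_three, Matrix.vecHead, Matrix.vecTail]
            ring
          have hPu : IsUnit Pm.det := by
            rw [hdet]
            exact (mul_ne_zero (mul_ne_zero two_ne_zero (pow_ne_zero 2 hv2))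
              (pow_ne_zero 3 hLpos.ne')).isUnit
          have hAP : A * Pm = Pm * Matrix.diagonal ![c * L, 0, -(c * L)] := by
            rw [hc]
            ext i j
            fin_cases i <;> fin_cases j <;>
              simp [A0v, hPm, Matrix.mul_apply, Fin.sum_univ_three, Matrix.diagonal,
                Matrix.vecHead, Matrix.vecTail] <;>
              try ring
            case _ => linear_combination (c * L) * hL2
            case _ => linear_combination (-(c * L)) * hL2
          refine ⟨Pm, hPu, c * L, mul_ne_zero hcne hLpos.ne', ?_⟩
          calc A = A * Pm * Pm⁻¹ := (Matrix.mul_nonsing_inv_cancel_right Pm A hPu).symm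
          _ = Pm * Matrix.diagonal ![c * L, 0, -(c * L)] * Pm⁻¹ := by rw [hAP]
        · -- v 0 = 0 and v 2 = 0 : A is already diagonal
          push_neg at hv0 hv2
          have hv1 : v 1 ≠ 0 := by
            intro h
            rw [qF, hv0, h] at hspace
            norm_num at hspace
          refine ⟨1, by simp, -(c * v 1), by simpa using ⟨hcne, hv1⟩, ?_⟩
          have hone : (1 : Matrix (Fin 3) (Fin 3) ℝ)⁻¹ = 1 :=
            Matrix.inv_eq_left_inv (by simp)
          rw [hone, Matrix.mul_one, Matrix.one_mul, hc]
          ext i j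
          fin_cases i <;> fin_cases j <;>
            simp [A0v, hv0, hv2, Matrix.diagonal, Matrix.vecHead, Matrix.vecTail]
end
end

section
/- Let v ∈ ℝ³ be a nonzero lightlike vector (q(v) = 0) and let A ∈ 𝔠𝔬(1,2) satisfy A·v = 0. Then either A is nilpotent, or A is diagonalizable over ℝ with eigenvalues 0, λ, 2λ for some λ ≠ 0 (so that the one-parameter group e^{tA} is conjugate to {diag(1, e^{tλ}, e^{2tλ})}). -/
open Matrix

noncomputable section

private lemma fin3mk0 (h : 0 < 3) : (⟨0, h⟩ : Fin 3) = 0 := rfl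
private lemma fin3mk1 (h : 1 < 3) : (⟨1, h⟩ : Fin 3) = 1 := rfl
private lemma fin3mk2 (h : 2 < 3) : (⟨2, h⟩ : Fin 3) = 2 := rfl

theorem stmt11 (v : Fin 3 → ℝ) (hv : v ≠ 0) (hlight : qF v = 0)
    (A : Matrix (Fin 3) (Fin 3) ℝ) (hA : A ∈ co12) (hAv : A.mulVec v = 0) :
    IsNilpotent A ∨
    ∃ P : Matrix (Fin 3) (Fin 3) ℝ, IsUnit P.det ∧
      ∃ lam : ℝ, lam ≠ 0 ∧ A = P * Matrix.diagonal ![0, lam, 2 * lam] * P⁻¹ := by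
  obtain ⟨α, hα⟩ := hA
  have hent : ∀ i j : Fin 3, (Aᵀ * Jmat + Jmat * A) i j = (α • Jmat) i j :=
    fun i j => congrFun (congrFun hα i) j
  have e00 := hent 0 0
  have e11 := hent 1 1
  have e22 := hent 2 2
  have e10 := hent 1 0
  have e12 := hent 1 2
  have e02 := hent 0 2
  simp only [Matrix.add_apply, Matrix.mul_apply, Matrix.smul_apply, Matrix.transpose_apply,
    Fin.sum_univ_three, smul_eq_mul,
    show Jmat 0 0 = 0 from rfl, show Jmat 0 1 = 0 from rfl, show Jmat 0 2 = 1 from rfl,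
    show Jmat 1 0 = 0 from rfl, show Jmat 1 1 = 1 from rfl, show Jmat 1 2 = 0 from rfl,
    show Jmat 2 0 = 1 from rfl, show Jmat 2 1 = 0 from rfl, show Jmat 2 2 = 0 from rfl,
    mul_zero, mul_one, zero_mul, one_mul, add_zero, zero_add] at e00 e11 e22 e10 e12 e02
  -- entry relations
  have hA20 : A 2 0 = 0 := by linarith
  have hA02 : A 0 2 = 0 := by linarith
  have hA21 : A 2 1 = -(A 1 0) := by linarith
  have hA12 : A 1 2 = -(A 0 1) := by linarith
  have hA22 : A 2 2 = 2 * A 1 1 - A 0 0 := by linarith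
  have hl : 2 * v 0 * v 2 + (v 1) ^ 2 = 0 := hlight
  have R : ∀ i, A i 0 * v 0 + A i 1 * v 1 + A i 2 * v 2 = 0 := by
    intro i
    have := congrFun hAv i
    simpa [Matrix.mulVec, dotProduct, Fin.sum_univ_three] using this
  have R0 := R 0
  have R1 := R 1
  have R2 := R 2
  rw [hA02] at R0
  rw [hA12] at R1
  rw [hA20, hA21, hA22] at R2
  have hvne : v 0 ≠ 0 ∨ v 1 ≠ 0 ∨ v 2 ≠ 0 := by
    by_contra h
    push_neg at h
    exact hv (funext fun i => by fin_cases i <;> simp [h.1, h.2.1, h.2.2])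
  by_cases hs : A 1 1 = 0
  · -- nilpotent case
    left
    rw [hs] at R1 R2
    have hsum : ((A 0 0) ^ 2 + 2 * A 0 1 * A 1 0) * ((v 0) ^ 2 + (v 1) ^ 2 + (v 2) ^ 2) = 0 := by
      linear_combination (A 0 0 * v 0 - A 0 1 * v 1 + 2 * A 1 0 * v 1) * R0
        + (2 * A 0 1 * v 0 - 2 * A 1 0 * v 2) * R1
        + (-(A 0 0 * v 2 - A 1 0 * v 1 - 2 * A 0 0 * v 0)) * R2
        + ((A 0 0) ^ 2 + (A 0 1) ^ 2 + (A 1 0) ^ 2) * hl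
    have hpos : (0:ℝ) < (v 0) ^ 2 + (v 1) ^ 2 + (v 2) ^ 2 := by
      rcases hvne with h | h | h <;>
        nlinarith [sq_nonneg (v 0), sq_nonneg (v 1), sq_nonneg (v 2), mul_self_pos.mpr h]
    have hkey : (A 0 0) ^ 2 + 2 * A 0 1 * A 1 0 = 0 := by
      rcases mul_eq_zero.mp hsum with h | h
      · exact h
      · exact absurd h (ne_of_gt hpos)
    refine ⟨3, ?_⟩
    ext i j
    fin_cases i <;> fin_cases j <;>
      simp only [pow_succ, pow_zero, Matrix.one_mul, Matrix.mul_apply, Fin.sum_univ_three,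
        Matrix.zero_apply, fin3mk0, fin3mk1, fin3mk2, hA20, hA02, hA21, hA12, hA22, hs] <;>
      first
        | linear_combination (A 0 0 : ℝ) * hkey
        | linear_combination (A 0 1 : ℝ) * hkey
        | linear_combination (A 1 0 : ℝ) * hkey
        | linear_combination (-(A 0 0) : ℝ) * hkey
        | linear_combination (-(A 0 1) : ℝ) * hkey
        | linear_combination (-(A 1 0) : ℝ) * hkey
        | linear_combination (0 : ℝ) * hkey
  · -- diagonalizable case
    right
    have hdet : A.det = 0 := Matrix.exists_mulVec_eq_zero_iff.mp ⟨v, hv, hAv⟩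
    have hdet' := hdet
    rw [Matrix.det_fin_three, hA20, hA02, hA21, hA12, hA22] at hdet'
    have hkey2 : 2 * A 0 0 * A 1 1 - (A 0 0) ^ 2 - 2 * A 0 1 * A 1 0 = 0 := by
      have h2 : A 1 1 * (2 * A 0 0 * A 1 1 - (A 0 0) ^ 2 - 2 * A 0 1 * A 1 0) = 0 := by
        linear_combination hdet'
      rcases mul_eq_zero.mp h2 with h | h
      · exact absurd h hs
      · exact h
    have hdsub : ∀ μ : ℝ, (A - μ • 1).det =
        (A 0 0 - μ) * (A 1 1 - μ) * (A 2 2 - μ) - (A 0 0 - μ) * A 1 2 * A 2 1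
          - A 0 1 * A 1 0 * (A 2 2 - μ) + A 0 1 * A 1 2 * A 2 0
          + A 0 2 * A 1 0 * A 2 1 - A 0 2 * (A 1 1 - μ) * A 2 0 := by
      intro μ
      rw [Matrix.det_fin_three]
      simp [Matrix.sub_apply, Matrix.smul_apply, Matrix.one_apply, Fin.ext_iff]
      try ring
    have hd0 : (A - (0:ℝ) • 1).det = 0 := by simpa using hdet
    have hd1 : (A - (A 1 1) • 1).det = 0 := by
      rw [hdsub, hA20, hA02, hA21, hA12, hA22]
      ring
    have hd2 : (A - (2 * A 1 1) • 1).det = 0 := by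
      rw [hdsub, hA20, hA02, hA21, hA12, hA22]
      linear_combination (-(A 1 1)) * hkey2
    have eig : ∀ μ : ℝ, (A - μ • 1).det = 0 → ∃ w : Fin 3 → ℝ, w ≠ 0 ∧ A.mulVec w = μ • w := by
      intro μ hμ
      obtain ⟨w, hwne, hw⟩ := Matrix.exists_mulVec_eq_zero_iff.mpr hμ
      refine ⟨w, hwne, ?_⟩
      rw [Matrix.sub_mulVec, Matrix.smul_mulVec, Matrix.one_mulVec, sub_eq_zero] at hw
      exact hw
    obtain ⟨w0, hw0ne, hw0⟩ := eig 0 hd0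
    obtain ⟨w1, hw1ne, hw1⟩ := eig (A 1 1) hd1
    obtain ⟨w2, hw2ne, hw2⟩ := eig (2 * A 1 1) hd2
    set D : Matrix (Fin 3) (Fin 3) ℝ := Matrix.diagonal ![0, A 1 1, 2 * A 1 1] with hD
    set P : Matrix (Fin 3) (Fin 3) ℝ :=
      Matrix.of (fun i j => if j = 0 then w0 i else if j = 1 then w1 i else w2 i) with hP
    have hP0 : ∀ k, P k 0 = w0 k := fun k => rfl
    have hP1 : ∀ k, P k 1 = w1 k := fun k => rfl
    have hP2 : ∀ k, P k 2 = w2 k := fun k => rfl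
    have hcol : ∀ (w : Fin 3 → ℝ) (μ : ℝ), A.mulVec w = μ • w →
        ∀ i, A i 0 * w 0 + A i 1 * w 1 + A i 2 * w 2 = μ * w i := by
      intro w μ h i
      have := congrFun h i
      simpa [Matrix.mulVec, dotProduct, Fin.sum_univ_three] using this
    have hv0 : (![0, A 1 1, 2 * A 1 1] : Fin 3 → ℝ) 0 = 0 := rfl
    have hv1 : (![0, A 1 1, 2 * A 1 1] : Fin 3 → ℝ) 1 = A 1 1 := rfl
    have hv2 : (![0, A 1 1, 2 * A 1 1] : Fin 3 → ℝ) 2 = 2 * A 1 1 := rfl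
    have hAP : A * P = P * D := by
      ext i j
      rw [hD, Matrix.mul_diagonal, Matrix.mul_apply, Fin.sum_univ_three]
      by_cases hj0 : j = 0
      · subst hj0
        simp only [hP0, hv0]
        linear_combination hcol w0 0 hw0 i
      · by_cases hj1 : j = 1
        · subst hj1
          simp only [hP1, hv1]
          linear_combination hcol w1 (A 1 1) hw1 i
        · have hj2 : j = 2 := by omega
          subst hj2
          simp only [hP2, hv2]
          linear_combination hcol w2 (2 * A 1 1) hw2 i
    have hPdet : IsUnit P.det := by
      rw [isUnit_iff_ne_zero]
      intro h0
      obtain ⟨cv, hcne, hPc⟩ := Matrix.exists_mulVec_eq_zero_iff.mpr h0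
      have e0 : ∀ i, w0 i * cv 0 + w1 i * cv 1 + w2 i * cv 2 = 0 := by
        intro i
        have := congrFun hPc i
        simp only [Matrix.mulVec, dotProduct, Fin.sum_univ_three, Pi.zero_apply,
          hP0, hP1, hP2] at this
        linarith [this]
      have h1 : (P * D).mulVec cv = 0 := by
        rw [← hAP, ← Matrix.mulVec_mulVec, hPc, Matrix.mulVec_zero]
      have h2 : (P * D * D).mulVec cv = 0 := by
        have hX : A * (P * D) = P * D * D := by
          calc A * (P * D) = (A * P) * D := (mul_assoc _ _ _).symm
          _ = P * D * D := by rw [hAP]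
        rw [← hX, ← Matrix.mulVec_mulVec, h1, Matrix.mulVec_zero]
      have e1 : ∀ i, A 1 1 * (w1 i * cv 1) + 2 * A 1 1 * (w2 i * cv 2) = 0 := by
        intro i
        have := congrFun h1 i
        simp only [hD, Matrix.mulVec, dotProduct, Fin.sum_univ_three, Pi.zero_apply,
          Matrix.mul_diagonal, hP0, hP1, hP2, hv0, hv1, hv2] at this
        linear_combination this
      have e2 : ∀ i, A 1 1 ^ 2 * (w1 i * cv 1) + 4 * A 1 1 ^ 2 * (w2 i * cv 2) = 0 := by
        intro i
        have := congrFun h2 i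
        simp only [hD, Matrix.mulVec, dotProduct, Fin.sum_univ_three, Pi.zero_apply,
          Matrix.mul_diagonal, hP0, hP1, hP2, hv0, hv1, hv2] at this
        linear_combination this
      obtain ⟨i1, hi1⟩ := Function.ne_iff.mp hw1ne
      obtain ⟨i2, hi2⟩ := Function.ne_iff.mp hw2ne
      obtain ⟨i0, hi0⟩ := Function.ne_iff.mp hw0ne
      simp only [Pi.zero_apply] at hi0 hi1 hi2
      have hc1 : cv 1 = 0 := by
        have hq : A 1 1 ^ 2 * (w1 i1 * cv 1) = 0 := by
          linear_combination 2 * A 1 1 * (e1 i1) - e2 i1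
        rcases mul_eq_zero.mp hq with h | h
        · exact absurd (pow_eq_zero_iff (by norm_num) |>.mp h) hs
        · rcases mul_eq_zero.mp h with h' | h'
          · exact absurd h' hi1
          · exact h'
      have hc2 : cv 2 = 0 := by
        have hq : 2 * A 1 1 * (w2 i2 * cv 2) = 0 := by
          linear_combination e1 i2 - (A 1 1 * w1 i2) * hc1
        rcases mul_eq_zero.mp hq with h | h
        · exact absurd (by linarith : A 1 1 = 0) hs
        · rcases mul_eq_zero.mp h with h' | h'
          · exact absurd h' hi2
          · exact h'
      have hc0 : cv 0 = 0 := by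
        have hq : w0 i0 * cv 0 = 0 := by
          linear_combination e0 i0 - w1 i0 * hc1 - w2 i0 * hc2
        rcases mul_eq_zero.mp hq with h | h
        · exact absurd h hi0
        · exact h
      exact hcne (funext fun i => by fin_cases i <;> [exact hc0; exact hc1; exact hc2])
    have : Invertible P := P.invertibleOfIsUnitDet hPdet
    refine ⟨P, hPdet, A 1 1, hs, ?_⟩
    exact ((Matrix.mul_inv_eq_iff_eq_mul_of_invertible P (P * D) A).mpr hAP.symm).symm
end
end
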